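/- Let A ∈ ℝ^{m×n} have full column rank and all rows nonzero, and let b ∈ ℝᵐ be such that Ax = b is consistent with unique solution x ∈ ℝⁿ. Let {x_k} be the RK iterates for the system Ax = b with arbitrary initial point x_0 ∈ ℝⁿ. Then for every k ≥ 0: 𝔼‖x_k − x‖² ≤ (1 − σ_min²/‖A‖_F²)^k ‖x_0 − x‖², where σ_min is the smallest singular value of A. -/

import Mathlib

/-!
Each RK step projects the iterate orthogonally onto a hyperplane `{y | aᵢᵀ y = bᵢ}` containing the
solution `x`, so by Pythagoras `‖x_{k+1} - x‖² = ‖e‖² - ⟨aᵢ, e⟩² / ‖aᵢ‖²` with `e = x_k - x`.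
Averaging over `i` with weights `‖aᵢ‖² / ‖A‖_F²` turns the subtracted term into
`‖A e‖² / ‖A‖_F²`, and `‖A e‖² ≥ σ_min² ‖e‖²` by the Rayleigh-quotient bound for `AᵀA`, whose
eigenvalues are all nonzero because `A` has trivial kernel. Hence `‖· - x‖²` contracts by the
factor `1 - σ_min² / ‖A‖_F² ∈ [0, 1)` in one-step expectation, and iterating gives the bound.
-/

open Matrix

noncomputable section

namespace RK

/-- The Euclidean inner product on `Fin n → ℝ`. -/
def dot {n : ℕ} (v w : Fin n → ℝ) : ℝ := ∑ i, v i * w i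

/-- The squared Euclidean norm on `Fin n → ℝ`. -/
def normSq {n : ℕ} (v : Fin n → ℝ) : ℝ := ∑ i, v i ^ 2

/-- The Euclidean norm on `Fin n → ℝ`. -/
def euclNorm {n : ℕ} (v : Fin n → ℝ) : ℝ := Real.sqrt (normSq v)

/-- The squared Frobenius norm of a matrix. -/
def frobSq {m n : ℕ} (A : Matrix (Fin m) (Fin n) ℝ) : ℝ := ∑ i, ∑ j, A i j ^ 2

/-- One step of the (randomized) Kaczmarz method for the system `A x ≈ b`, using row `i`:
`x ↦ x - ((aᵢᵀ x - bᵢ) / ‖aᵢ‖²) aᵢ`. -/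
def rkStep {m n : ℕ} (A : Matrix (Fin m) (Fin n) ℝ) (b : Fin m → ℝ) (i : Fin m)
    (x : Fin n → ℝ) : Fin n → ℝ :=
  x - ((dot (A i) x - b i) / normSq (A i)) • A i

/-- `rkExp A b x0 k f` is the expectation `𝔼 f(x_k)` of `f` evaluated at the `k`-th iterate of the
randomized Kaczmarz algorithm applied to `A x ≈ b` started at `x0`, where at each step the row
index `i` is drawn independently at random with probability `‖aᵢ‖² / ‖A‖_F²`. -/
def rkExp {m n : ℕ} (A : Matrix (Fin m) (Fin n) ℝ) (b : Fin m → ℝ) (x0 : Fin n → ℝ) :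
    ℕ → ((Fin n → ℝ) → ℝ) → ℝ
  | 0, f => f x0
  | k + 1, f => rkExp A b x0 k fun x => ∑ i, normSq (A i) / frobSq A * f (rkStep A b i x)

/-- The four Penrose conditions: `B` is the Moore–Penrose pseudoinverse of `A`. -/
def IsMoorePenrose {m n : ℕ} (A : Matrix (Fin m) (Fin n) ℝ)
    (B : Matrix (Fin n) (Fin m) ℝ) : Prop :=
  A * B * A = A ∧ B * A * B = B ∧ (A * B)ᵀ = A * B ∧ (B * A)ᵀ = B * A

/-- The row space `range(Aᵀ)` of a matrix `A`. -/
def rowSpace {m n : ℕ} (A : Matrix (Fin m) (Fin n) ℝ) : Set (Fin n → ℝ) :=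
  {v | ∃ u : Fin m → ℝ, v = Aᵀ.mulVec u}

/-- The null space (kernel) of a matrix `A`. -/
def nullSpace {m n : ℕ} (A : Matrix (Fin m) (Fin n) ℝ) : Set (Fin n → ℝ) :=
  {v | A.mulVec v = 0}

/-- `σ` is the smallest nonzero singular value of `A`: `σ > 0`, `σ²` is an eigenvalue of `AᵀA`,
and `σ²` is less than or equal to every nonzero eigenvalue of `AᵀA`. -/
def IsSmallestNonzeroSingularValue {m n : ℕ} (A : Matrix (Fin m) (Fin n) ℝ) (σ : ℝ) : Prop :=
  0 < σ ∧ (∃ v : Fin n → ℝ, v ≠ 0 ∧ (Aᵀ * A).mulVec v = σ ^ 2 • v) ∧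
    ∀ μ : ℝ, μ ≠ 0 → (∃ v : Fin n → ℝ, v ≠ 0 ∧ (Aᵀ * A).mulVec v = μ • v) → σ ^ 2 ≤ μ

end RK

open Module.End

theorem LinearMap.IsSymmetric.mul_inner_self_le {E : Type*} [NormedAddCommGroup E]
    [InnerProductSpace ℝ E] [FiniteDimensional ℝ E] {T : E →ₗ[ℝ] E} (hT : T.IsSymmetric)
    {c : ℝ} (hc : ∀ μ, HasEigenvalue T μ → c ≤ μ) (x : E) :
    c * inner ℝ x x ≤ inner ℝ (T x) x := by
  rcases eq_or_ne x 0 with rfl | hx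
  · simp
  have : Nontrivial E := ⟨⟨x, 0, hx⟩⟩
  have hbdd : BddBelow (Set.range fun y : { y : E // y ≠ 0 } =>
      RCLike.re (inner ℝ (T y) (y : E)) / ‖(y : E)‖ ^ 2) := by
    refine ⟨-‖LinearMap.toContinuousLinearMap T‖, ?_⟩
    rintro _ ⟨y, rfl⟩
    exact neg_le_of_abs_le ((LinearMap.toContinuousLinearMap T).rayleighQuotient_le_norm y)
  have hle := (hc _ hT.hasEigenvalue_iInf_of_finiteDimensional).trans (ciInf_le hbdd ⟨x, hx⟩)
  rw [real_inner_self_eq_norm_sq]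
  have hx2 : 0 < ‖x‖ ^ 2 := by positivity
  simpa [le_div_iff₀ hx2] using hle

theorem Matrix.IsSymm.mul_dotProduct_self_le {ι : Type*} [Fintype ι] [DecidableEq ι]
    {M : Matrix ι ι ℝ} (hM : M.IsSymm) {c : ℝ}
    (hc : ∀ μ : ℝ, (∃ v : ι → ℝ, v ≠ 0 ∧ M *ᵥ v = μ • v) → c ≤ μ) (x : ι → ℝ) :
    c * (x ⬝ᵥ x) ≤ x ⬝ᵥ M *ᵥ x := by
  have hT : (toEuclideanLin M).IsSymmetric := isSymmetric_toEuclideanLin_iff.mpr hM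
  have key := hT.mul_inner_self_le (fun μ hμ => hc μ ?_) (WithLp.toLp 2 x)
  · rwa [show toEuclideanLin M (WithLp.toLp 2 x) = WithLp.toLp 2 (M *ᵥ x) from rfl,
      EuclideanSpace.inner_toLp_toLp, EuclideanSpace.inner_toLp_toLp, star_trivial] at key
  obtain ⟨v, hv⟩ := hμ.exists_hasEigenvector
  exact ⟨WithLp.ofLp v, by simpa using hv.2, by simpa using congrArg WithLp.ofLp hv.apply_eq_smul⟩

namespace RK

variable {m n : ℕ}

theorem dot_eq_dotProduct (v w : Fin n → ℝ) : dot v w = v ⬝ᵥ w := rfl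

theorem normSq_eq_dotProduct (v : Fin n → ℝ) : normSq v = v ⬝ᵥ v := by
  simp only [normSq, dotProduct, sq]

theorem normSq_eq_zero {v : Fin n → ℝ} : normSq v = 0 ↔ v = 0 := by
  rw [normSq_eq_dotProduct, dotProduct_self_eq_zero]

theorem normSq_nonneg (v : Fin n → ℝ) : 0 ≤ normSq v :=
  Finset.sum_nonneg fun _ _ => sq_nonneg _

theorem frobSq_eq_sum_normSq (A : Matrix (Fin m) (Fin n) ℝ) :
    frobSq A = ∑ i, normSq (A i) := rfl

theorem frobSq_nonneg (A : Matrix (Fin m) (Fin n) ℝ) : 0 ≤ frobSq A :=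
  Finset.sum_nonneg fun i _ => normSq_nonneg (A i)

theorem normSq_mulVec (A : Matrix (Fin m) (Fin n) ℝ) (v : Fin n → ℝ) :
    normSq (A *ᵥ v) = ∑ i, dot (A i) v ^ 2 := rfl

theorem normSq_mulVec_eq_dotProduct_gram (A : Matrix (Fin m) (Fin n) ℝ) (v : Fin n → ℝ) :
    normSq (A *ᵥ v) = v ⬝ᵥ (Aᵀ * A) *ᵥ v := by
  rw [normSq_eq_dotProduct, ← mulVec_mulVec, dotProduct_mulVec v Aᵀ, vecMul_transpose]

theorem normSq_mulVec_le_frobSq_mul (A : Matrix (Fin m) (Fin n) ℝ) (v : Fin n → ℝ) :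
    normSq (A *ᵥ v) ≤ frobSq A * normSq v := by
  rw [normSq_mulVec, frobSq_eq_sum_normSq, Finset.sum_mul]
  exact Finset.sum_le_sum fun i _ => Finset.sum_mul_sq_le_sq_mul_sq _ (A i) v

/-- Pythagoras for the projection of `e` onto `a⊥`, multiplied through by `‖a‖²` so that it also
holds for `a = 0`. -/
theorem normSq_mul_normSq_sub_proj (a e : Fin n → ℝ) :
    normSq a * normSq (e - (dot a e / normSq a) • a) = normSq a * normSq e - dot a e ^ 2 := by
  rcases eq_or_ne a 0 with rfl | ha
  · simp [normSq, dot]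
  have hna : a ⬝ᵥ a ≠ 0 := fun h => ha (dotProduct_self_eq_zero.mp h)
  simp only [normSq_eq_dotProduct, dot_eq_dotProduct, sub_dotProduct, dotProduct_sub,
    smul_dotProduct, dotProduct_smul, smul_eq_mul, dotProduct_comm e a]
  field_simp
  ring

namespace IsSmallestNonzeroSingularValue

variable {A : Matrix (Fin m) (Fin n) ℝ} {σ : ℝ}

theorem sq_le_frobSq (hσ : IsSmallestNonzeroSingularValue A σ) : σ ^ 2 ≤ frobSq A := by
  obtain ⟨-, ⟨v, hv, hAv⟩, -⟩ := hσ
  have hv : 0 < normSq v := (normSq_nonneg v).lt_of_ne' (mt normSq_eq_zero.mp hv)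
  have hgram : σ ^ 2 * normSq v = normSq (A *ᵥ v) := by
    rw [normSq_mulVec_eq_dotProduct_gram, hAv, dotProduct_smul, normSq_eq_dotProduct, smul_eq_mul]
  exact le_of_mul_le_mul_right (hgram ▸ normSq_mulVec_le_frobSq_mul A v) hv

theorem frobSq_pos (hσ : IsSmallestNonzeroSingularValue A σ) : 0 < frobSq A :=
  (pow_pos hσ.1 2).trans_le hσ.sq_le_frobSq

theorem sq_mul_normSq_le_normSq_mulVec (hσ : IsSmallestNonzeroSingularValue A σ)
    (hrank : ∀ v : Fin n → ℝ, A *ᵥ v = 0 → v = 0) (e : Fin n → ℝ) :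
    σ ^ 2 * normSq e ≤ normSq (A *ᵥ e) := by
  rw [normSq_eq_dotProduct, normSq_mulVec_eq_dotProduct_gram]
  have hsymm : (Aᵀ * A).IsSymm := by rw [IsSymm, transpose_mul, transpose_transpose]
  refine hsymm.mul_dotProduct_self_le (fun μ hμ => ?_) e
  obtain ⟨v, hv, hAv⟩ := hμ
  refine hσ.2.2 μ (fun hμ0 => hv (hrank v ?_)) ⟨v, hv, hAv⟩
  rw [← normSq_eq_zero, normSq_mulVec_eq_dotProduct_gram, hAv, hμ0, zero_smul, dotProduct_zero]

end IsSmallestNonzeroSingularValue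

/-- The transition operator of the RK Markov chain: `𝔼 f(x₁)` for the RK iterate `x₁` started
at `y`. -/
def rkTransition (A : Matrix (Fin m) (Fin n) ℝ) (b : Fin m → ℝ) (f : (Fin n → ℝ) → ℝ)
    (y : Fin n → ℝ) : ℝ :=
  ∑ i, normSq (A i) / frobSq A * f (rkStep A b i y)

section Expectation

variable (A : Matrix (Fin m) (Fin n) ℝ) (b : Fin m → ℝ) (x0 : Fin n → ℝ)

theorem rkExp_succ (k : ℕ) (f : (Fin n → ℝ) → ℝ) :
    rkExp A b x0 (k + 1) f = rkExp A b x0 k (rkTransition A b f) := rfl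

theorem rkTransition_mono {f g : (Fin n → ℝ) → ℝ} (h : ∀ y, f y ≤ g y) (y : Fin n → ℝ) :
    rkTransition A b f y ≤ rkTransition A b g y :=
  Finset.sum_le_sum fun _ _ =>
    mul_le_mul_of_nonneg_left (h _) (div_nonneg (normSq_nonneg _) (frobSq_nonneg A))

theorem rkExp_mono (k : ℕ) {f g : (Fin n → ℝ) → ℝ} (h : ∀ y, f y ≤ g y) :
    rkExp A b x0 k f ≤ rkExp A b x0 k g := by
  induction k generalizing f g with
  | zero => exact h x0
  | succ k ih => exact ih (rkTransition_mono A b h)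

theorem rkExp_const_mul (k : ℕ) (c : ℝ) (f : (Fin n → ℝ) → ℝ) :
    rkExp A b x0 k (fun y => c * f y) = c * rkExp A b x0 k f := by
  induction k generalizing f with
  | zero => rfl
  | succ k ih =>
    rw [rkExp_succ, rkExp_succ, ← ih]
    congr 1
    funext y
    simp only [rkTransition, Finset.mul_sum]
    exact Finset.sum_congr rfl fun _ _ => by ring

theorem rkExp_le_pow_mul {f : (Fin n → ℝ) → ℝ} {r : ℝ} (hr : 0 ≤ r)
    (hf : ∀ y, rkTransition A b f y ≤ r * f y) (k : ℕ) :
    rkExp A b x0 k f ≤ r ^ k * f x0 := by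
  induction k with
  | zero => simp [rkExp]
  | succ k ih =>
    calc rkExp A b x0 (k + 1) f
        ≤ rkExp A b x0 k (fun y => r * f y) := rkExp_mono A b x0 k hf
      _ = r * rkExp A b x0 k f := rkExp_const_mul A b x0 k r f
      _ ≤ r ^ (k + 1) * f x0 := by
        rw [pow_succ', mul_assoc]
        exact mul_le_mul_of_nonneg_left ih hr

end Expectation

section OneStep

variable {A : Matrix (Fin m) (Fin n) ℝ} {b : Fin m → ℝ} {x : Fin n → ℝ}

theorem rkStep_sub_of_mulVec_eq (hx : A *ᵥ x = b) (i : Fin m) (y : Fin n → ℝ) :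
    rkStep A b i y - x = (y - x) - (dot (A i) (y - x) / normSq (A i)) • A i := by
  have hb : b i = dot (A i) x := by rw [← hx]; rfl
  rw [rkStep, hb, show dot (A i) (y - x) = dot (A i) y - dot (A i) x from dotProduct_sub _ _ _]
  abel

theorem rkTransition_normSq_sub (hx : A *ᵥ x = b) (hF : frobSq A ≠ 0) (y : Fin n → ℝ) :
    rkTransition A b (fun z => normSq (z - x)) y =
      normSq (y - x) - normSq (A *ᵥ (y - x)) / frobSq A := by
  simp only [rkTransition, div_mul_eq_mul_div, rkStep_sub_of_mulVec_eq hx,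
    normSq_mul_normSq_sub_proj, ← Finset.sum_div, Finset.sum_sub_distrib, ← Finset.sum_mul,
    ← frobSq_eq_sum_normSq, ← normSq_mulVec]
  field_simp

end OneStep

theorem rk_strohmer_vershynin_general {m n : ℕ}
    (A : Matrix (Fin m) (Fin n) ℝ) (b : Fin m → ℝ)
    (hrank : ∀ v : Fin n → ℝ, A.mulVec v = 0 → v = 0)
    (σmin : ℝ) (hσ : IsSmallestNonzeroSingularValue A σmin)
    (x : Fin n → ℝ) (hx : A.mulVec x = b)
    (x0 : Fin n → ℝ) (k : ℕ) :
    rkExp A b x0 k (fun y => normSq (y - x)) ≤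
      (1 - σmin ^ 2 / frobSq A) ^ k * normSq (x0 - x) := by
  have hF := hσ.frobSq_pos
  have hr : 0 ≤ 1 - σmin ^ 2 / frobSq A := sub_nonneg.2 ((div_le_one hF).2 hσ.sq_le_frobSq)
  refine rkExp_le_pow_mul A b x0 hr (fun y => ?_) k
  rw [rkTransition_normSq_sub hx hF.ne', sub_mul, one_mul, div_mul_eq_mul_div]
  gcongr
  exact hσ.sq_mul_normSq_le_normSq_mulVec hrank (y - x)

/-- **Theorem 1.1 (Strohmer–Vershynin).** For a consistent system `Ax = b` with `A` of full
column rank and unique solution `x`, the RK iterates from any `x₀` satisfy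
`𝔼‖x_k − x‖² ≤ (1 − σ_min²/‖A‖_F²)^k ‖x₀ − x‖²`. -/
theorem rk_strohmer_vershynin {m n : ℕ}
    (A : Matrix (Fin m) (Fin n) ℝ) (b : Fin m → ℝ)
    (hA : A ≠ 0) (hrows : ∀ i, A i ≠ 0)
    (hrank : ∀ v : Fin n → ℝ, A.mulVec v = 0 → v = 0)
    (σmin : ℝ) (hσ : IsSmallestNonzeroSingularValue A σmin)
    (x : Fin n → ℝ) (hx : A.mulVec x = b)
    (x0 : Fin n → ℝ) (k : ℕ) :
    rkExp A b x0 k (fun y => normSq (y - x)) ≤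
      (1 - σmin ^ 2 / frobSq A) ^ k * normSq (x0 - x) :=
  rk_strohmer_vershynin_general A b hrank σmin hσ x hx x0 k

end RK
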